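/- arXiv:0901.1390 — 3 statements merged into one kernel-verified Lean document; each statement's English description precedes it below -/
import Mathlib

section
/- For every b > 0, with g_b(x) = ∑_{k=0}^∞ x^k/(k!·Γ(k+b)) on (0,∞), the function x ↦ x^b·g_b'(x) is differentiable on (0,∞) and its derivative at x equals x^{b−1}·g_b(x). -/
/-!
The coefficients `1/Γ(n+b)` of `g_b(x) = ∑ (1/Γ(n+b)) xⁿ/n!` are bounded, so the series can be
differentiated termwise, giving `g_b' = g_{b+1}`. The functional equation `Γ(s+1) = s Γ(s)` splits
`1/Γ(n+b) = (b + n)/Γ(n+b+1)`, which termwise gives `g_b = b g_{b+1} + x g_{b+2}`. The product rule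
then yields `(x^b g_{b+1})' = x^{b-1} (b g_{b+1} + x g_{b+2}) = x^{b-1} g_b`.
-/

noncomputable section

/-- `g_b(x) = ∑_{k=0}^∞ x^k/(k!·Γ(k+b))`. -/
def gFun (b : ℝ) (x : ℝ) : ℝ :=
  ∑' k : ℕ, x ^ k / ((k.factorial : ℝ) * Real.Gamma ((k : ℝ) + b))

open Real
open scoped Nat

section FactorialSeries

variable {c : ℕ → ℝ} {C : ℝ}

theorem summable_mul_pow_div_factorial (hc : ∀ n, |c n| ≤ C) (x : ℝ) :
    Summable fun n => c n * x ^ n / n ! := by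
  refine .of_norm_bounded ((summable_pow_div_factorial |x|).mul_left C) fun n => ?_
  rw [norm_div, norm_mul, norm_pow, Real.norm_eq_abs, Real.norm_eq_abs, Real.norm_natCast,
    mul_div_assoc]
  gcongr
  exact hc n

theorem hasDerivAt_pow_succ_div_factorial (n : ℕ) (x : ℝ) :
    HasDerivAt (fun y : ℝ => y ^ (n + 1) / (n + 1)!) (x ^ n / n !) x := by
  refine ((hasDerivAt_pow (n + 1) x).div_const _).congr_deriv ?_
  rw [Nat.factorial_succ, Nat.add_sub_cancel]
  push_cast
  field_simp

theorem hasDerivAt_tsum_mul_pow_div_factorial (hc : ∀ n, |c n| ≤ C) (x : ℝ) :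
    HasDerivAt (fun y => ∑' n, c n * y ^ n / n !) (∑' n, c (n + 1) * x ^ n / n !) x := by
  have hsplit : (fun y => ∑' n, c n * y ^ n / n !) =
      fun y => c 0 + ∑' n, c (n + 1) * y ^ (n + 1) / (n + 1)! := by
    funext y
    rw [(summable_mul_pow_div_factorial hc y).tsum_eq_zero_add]
    simp
  set R := |x| + 1
  have hxR : x ∈ Metric.ball 0 R := by simp [R]
  have hderiv := hasDerivAt_tsum_of_isPreconnected (u := fun n => C * (R ^ n / n !))
    (g := fun n y => c (n + 1) * y ^ (n + 1) / (n + 1)!) (g' := fun n y => c (n + 1) * y ^ n / n !)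
    ((summable_pow_div_factorial R).mul_left C) Metric.isOpen_ball
    (convex_ball 0 R).isPreconnected
    (fun n y _ => by
      simpa only [mul_div_assoc] using (hasDerivAt_pow_succ_div_factorial n y).const_mul (c (n + 1)))
    (fun n y hy => ?_) hxR ((summable_nat_add_iff 1).mpr (summable_mul_pow_div_factorial hc x)) hxR
  · rw [hsplit]
    exact hderiv.const_add (c 0)
  · have hyR : |y| ≤ R := by simpa using (Metric.mem_ball.mp hy).le
    rw [norm_div, norm_mul, norm_pow, Real.norm_eq_abs, Real.norm_eq_abs, Real.norm_natCast,
      mul_div_assoc]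
    exact mul_le_mul (hc _) (by gcongr) (by positivity) ((abs_nonneg _).trans (hc 0))

theorem hasSum_natCast_mul_mul_pow_div_factorial (hc : ∀ n, |c n| ≤ C) (x : ℝ) :
    HasSum (fun n => n * c n * x ^ n / n !) (x * ∑' n, c (n + 1) * x ^ n / n !) := by
  have hterm : (fun n => ((n + 1 : ℕ) : ℝ) * c (n + 1) * x ^ (n + 1) / (n + 1)!) =
      fun n => x * (c (n + 1) * x ^ n / n !) := by
    funext n
    rw [Nat.factorial_succ]
    push_cast
    field_simp
    ring
  have hshift : HasSum (fun n => ((n + 1 : ℕ) : ℝ) * c (n + 1) * x ^ (n + 1) / (n + 1)!)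
      (x * ∑' n, c (n + 1) * x ^ n / n !) := by
    rw [hterm]
    exact (summable_mul_pow_div_factorial (c := fun n => c (n + 1)) (fun n => hc (n + 1))
      x).hasSum.mul_left x
  simpa using (hasSum_nat_add_iff (f := fun n => (n : ℝ) * c n * x ^ n / n !) 1).mp hshift

end FactorialSeries

theorem Real.Gamma_nat_add_ge_min {b : ℝ} (hb : 0 < b) (n : ℕ) :
    min (Gamma b) (b * Gamma b) ≤ Gamma (n + b) := by
  induction n with
  | zero => simp
  | succ n ih =>
    have hpos : 0 < (n : ℝ) + b := by positivity
    rw [Nat.cast_succ, add_right_comm, Gamma_add_one hpos.ne']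
    rcases n.eq_zero_or_pos with rfl | hn
    · simp
    · have h1 : (1 : ℝ) ≤ n + b := by
        have : (1 : ℝ) ≤ n := by exact_mod_cast hn
        linarith
      exact ih.trans (le_mul_of_one_le_left (Gamma_pos_of_pos hpos).le h1)

theorem Real.exists_abs_inv_Gamma_nat_add_le {b : ℝ} (hb : 0 < b) :
    ∃ C, ∀ n : ℕ, |(Gamma (n + b))⁻¹| ≤ C := by
  refine ⟨(min (Gamma b) (b * Gamma b))⁻¹, fun n => ?_⟩
  have hmin : 0 < min (Gamma b) (b * Gamma b) :=
    lt_min (Gamma_pos_of_pos hb) (mul_pos hb (Gamma_pos_of_pos hb))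
  rw [abs_inv, abs_of_pos (Gamma_pos_of_pos (by positivity))]
  exact inv_anti₀ hmin (Gamma_nat_add_ge_min hb n)

theorem gFun_eq_tsum (b : ℝ) :
    gFun b = fun x => ∑' n : ℕ, (Gamma (n + b))⁻¹ * x ^ n / n ! :=
  funext fun _ => tsum_congr fun _ => by ring

theorem hasDerivAt_gFun {b : ℝ} (hb : 0 < b) (x : ℝ) :
    HasDerivAt (gFun b) (gFun (b + 1) x) x := by
  obtain ⟨C, hC⟩ := exists_abs_inv_Gamma_nat_add_le hb
  rw [gFun_eq_tsum, gFun_eq_tsum]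
  convert hasDerivAt_tsum_mul_pow_div_factorial hC x using 7
  push_cast
  ring

theorem gFun_eq_mul_add_mul {b : ℝ} (hb : 0 < b) (x : ℝ) :
    gFun b x = b * gFun (b + 1) x + x * gFun (b + 2) x := by
  obtain ⟨C, hC⟩ := exists_abs_inv_Gamma_nat_add_le (b := b + 1) (by linarith)
  have hsum := ((summable_mul_pow_div_factorial hC x).hasSum.mul_left b).add
    (hasSum_natCast_mul_mul_pow_div_factorial hC x)
  simp only [gFun_eq_tsum]
  convert hsum.tsum_eq using 1
  · refine tsum_congr fun n => ?_
    have hpos : 0 < (n : ℝ) + b := by positivity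
    rw [← add_assoc, Gamma_add_one hpos.ne']
    have := Gamma_pos_of_pos hpos
    field_simp
    ring
  · congr 2
    refine tsum_congr fun n => ?_
    congr 4
    push_cast
    ring

/-- For every `b > 0`, the function `x ↦ x^b · g_b'(x)` is differentiable on `(0,∞)` with
derivative `x^{b-1} · g_b(x)` at every `x > 0`. -/
theorem stmt2 (b : ℝ) (hb : 0 < b) :
    ∀ x : ℝ, 0 < x →
      HasDerivAt (fun t : ℝ => t ^ b * deriv (gFun b) t)
        (x ^ (b - 1) * gFun b x) x := by
  intro x hx
  have hderiv : deriv (gFun b) = gFun (b + 1) := funext fun t => (hasDerivAt_gFun hb t).deriv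
  have hprod := (hasDerivAt_rpow_const (p := b) (Or.inl hx.ne')).mul
    (hasDerivAt_gFun (b := b + 1) (by linarith) x)
  rw [hderiv]
  refine hprod.congr_deriv ?_
  rw [gFun_eq_mul_add_mul hb x, show b + 1 + 1 = b + 2 by ring, rpow_sub_one hx.ne']
  field_simp
end
end

section
/- For every b > 0, the function y defined on (0,∞) by y(x) = x^{(1−b)/2}·I(b−1, 2√x) is twice differentiable and satisfies x·y''(x) + b·y'(x) = y(x) for all x > 0. -/
noncomputable section

/-- The modified Bessel function of the first kind,
`I(α, z) = ∑_{k=0}^∞ (z/2)^{2k+α}/(k!·Γ(k+α+1))`. -/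
def besselI (α z : ℝ) : ℝ :=
  ∑' k : ℕ, (z / 2) ^ (2 * (k : ℝ) + α) / ((k.factorial : ℝ) * Real.Gamma ((k : ℝ) + α + 1))

/-- `y(x) = x^{(1-b)/2} · I(b-1, 2√x)`. -/
def yFun (b : ℝ) (x : ℝ) : ℝ :=
  x ^ ((1 - b) / 2) * besselI (b - 1) (2 * Real.sqrt x)

/-! For `x > 0`, expanding the Bessel series with `z = 2√x` turns `y` into the entire power series
`∑ cₙ xⁿ` with `cₙ = 1 / (n! Γ(n + b))`. Coefficient sequences bounded by `K / n!` are stable under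
termwise differentiation `aₙ ↦ (n + 1) aₙ₊₁`, so the series can be differentiated twice term by
term. In coefficients, `x y'' = ∑ n dₙ xⁿ` with `dₙ = (n + 1) cₙ₊₁` the coefficients of `y'`, so the
equation `x y'' + b y' = y` becomes `(n + b) dₙ = cₙ`, which is `Γ(n + b + 1) = (n + b) Γ(n + b)`. -/

open Nat

section PowerSeries

variable {𝕜 : Type*} [RCLike 𝕜]

def derivCoeff (a : ℕ → 𝕜) (n : ℕ) : 𝕜 := (n + 1) * a (n + 1)

variable {a : ℕ → 𝕜} {K : ℝ}

lemma norm_mul_pow_le_of_norm_le_div_factorial (ha : ∀ n, ‖a n‖ ≤ K / n !) (n : ℕ)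
    {y : 𝕜} {R : ℝ} (hy : ‖y‖ ≤ R) : ‖a n * y ^ n‖ ≤ K * (R ^ n / n !) := by
  calc ‖a n * y ^ n‖ = ‖a n‖ * ‖y‖ ^ n := by rw [norm_mul, norm_pow]
    _ ≤ K / n ! * R ^ n :=
      mul_le_mul (ha n) (pow_le_pow_left₀ (norm_nonneg y) hy n) (by positivity)
        ((norm_nonneg _).trans (ha n))
    _ = K * (R ^ n / n !) := by ring

lemma summable_mul_pow_of_norm_le_div_factorial (ha : ∀ n, ‖a n‖ ≤ K / n !) (z : 𝕜) :
    Summable fun n => a n * z ^ n :=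
  .of_norm_bounded ((Real.summable_pow_div_factorial ‖z‖).mul_left K)
    fun n => norm_mul_pow_le_of_norm_le_div_factorial ha n le_rfl

lemma norm_derivCoeff_le_div_factorial (ha : ∀ n, ‖a n‖ ≤ K / n !) (n : ℕ) :
    ‖derivCoeff a n‖ ≤ K / n ! := by
  have h := ha (n + 1)
  rw [factorial_succ, cast_mul, mul_comm, ← div_div, le_div_iff₀ (by positivity)] at h
  rw [derivCoeff, norm_mul, ← cast_succ, RCLike.norm_natCast, mul_comm]
  exact h

lemma hasDerivAt_tsum_mul_pow (ha : ∀ n, ‖a n‖ ≤ K / n !) (x : 𝕜) :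
    HasDerivAt (fun z => ∑' n, a n * z ^ n) (∑' n, derivCoeff a n * x ^ n) x := by
  have hsplit : (fun z => ∑' n, a n * z ^ n) = fun z => a 0 + ∑' n, a (n + 1) * z ^ (n + 1) := by
    funext z
    simpa using (summable_mul_pow_of_norm_le_div_factorial ha z).tsum_eq_zero_add
  rw [hsplit]
  refine HasDerivAt.const_add _ <| hasDerivAt_tsum_of_isPreconnected (t := Metric.ball 0 (‖x‖ + 1))
    ((Real.summable_pow_div_factorial (‖x‖ + 1)).mul_left K) Metric.isOpen_ball
    (convex_ball _ _).isPreconnected (fun n y _ => ?_)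
    (fun n y hy => norm_mul_pow_le_of_norm_le_div_factorial
      (norm_derivCoeff_le_div_factorial ha) n (y := y) (mem_ball_zero_iff.mp hy).le)
    (y₀ := 0) (by simp; positivity) (by simp [summable_zero]) (by simp)
  simpa [derivCoeff, mul_comm, mul_left_comm, mul_assoc] using
    (hasDerivAt_pow (n + 1) y).const_mul (a (n + 1))

lemma deriv_tsum_mul_pow (ha : ∀ n, ‖a n‖ ≤ K / n !) :
    deriv (fun z => ∑' n, a n * z ^ n) = fun x => ∑' n, derivCoeff a n * x ^ n :=
  funext fun x => (hasDerivAt_tsum_mul_pow ha x).deriv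

lemma mul_tsum_derivCoeff_mul_pow (ha : ∀ n, ‖a n‖ ≤ K / n !) (x : 𝕜) :
    x * ∑' n, derivCoeff a n * x ^ n = ∑' n, n * a n * x ^ n := by
  have hshift : (fun n => x * (derivCoeff a n * x ^ n)) =
      fun n => ((n + 1 : ℕ) : 𝕜) * a (n + 1) * x ^ (n + 1) := by
    funext n; simp only [derivCoeff, cast_succ]; ring
  rw [← tsum_mul_left, tsum_eq_zero_add' (f := fun n => (n : 𝕜) * a n * x ^ n), ← hshift]
  · simp
  · exact hshift ▸ (summable_mul_pow_of_norm_le_div_factorial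
      (norm_derivCoeff_le_div_factorial ha) x).mul_left x

end PowerSeries

open Real

lemma Real.Gamma_add_one_le_Gamma_nat_add_add_one {b : ℝ} (hb : 0 ≤ b) (n : ℕ) :
    Gamma (b + 1) ≤ Gamma (n + b + 1) := by
  induction n with
  | zero => simp
  | succ m ih =>
    have hm : 1 ≤ (m : ℝ) + b + 1 := by linarith [m.cast_nonneg (α := ℝ)]
    calc Gamma (b + 1) ≤ Gamma (m + b + 1) := ih
      _ ≤ (m + b + 1) * Gamma (m + b + 1) :=
        le_mul_of_one_le_left (Gamma_pos_of_pos (by linarith)).le hm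
      _ = Gamma ((m + 1 : ℕ) + b + 1) := by
        rw [← Gamma_add_one (by linarith)]; push_cast; ring_nf

lemma Real.min_Gamma_le_Gamma_nat_add {b : ℝ} (hb : 0 ≤ b) (n : ℕ) :
    min (Gamma b) (Gamma (b + 1)) ≤ Gamma (n + b) := by
  cases n with
  | zero => simp
  | succ m =>
    calc min (Gamma b) (Gamma (b + 1)) ≤ Gamma (b + 1) := min_le_right _ _
      _ ≤ Gamma ((m + 1 : ℕ) + b) := by
        simpa [add_right_comm] using Gamma_add_one_le_Gamma_nat_add_add_one hb m

def yCoeff (b : ℝ) (n : ℕ) : ℝ := (n ! * Gamma (n + b))⁻¹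

lemma norm_yCoeff_le {b : ℝ} (hb : 0 < b) (n : ℕ) :
    ‖yCoeff b n‖ ≤ (min (Gamma b) (Gamma (b + 1)))⁻¹ / n ! := by
  have hmin : 0 < min (Gamma b) (Gamma (b + 1)) :=
    lt_min (Gamma_pos_of_pos hb) (Gamma_pos_of_pos (by linarith))
  rw [yCoeff, norm_inv, Real.norm_of_nonneg (by positivity), div_eq_inv_mul, ← mul_inv]
  exact inv_anti₀ (by positivity)
    (mul_le_mul_of_nonneg_left (min_Gamma_le_Gamma_nat_add hb.le n) (by positivity))

lemma yCoeff_eq_mul_derivCoeff {b : ℝ} (hb : 0 < b) (n : ℕ) :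
    yCoeff b n = (n + b) * derivCoeff (yCoeff b) n := by
  have hnb : (n : ℝ) + b ≠ 0 := by positivity
  have hΓ : ((n + 1 : ℕ) : ℝ) + b = (n + b) + 1 := by push_cast; ring
  rw [derivCoeff, yCoeff, yCoeff, hΓ, Gamma_add_one hnb, factorial_succ]
  have hΓpos := Gamma_pos_of_pos (by positivity : (0 : ℝ) < n + b)
  push_cast
  field_simp

lemma yFun_eq_tsum (b : ℝ) {x : ℝ} (hx : 0 < x) :
    yFun b x = ∑' n, yCoeff b n * x ^ n := by
  have hsx : 0 < √x := sqrt_pos.2 hx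
  have hterm (k : ℕ) : √x ^ (2 * (k : ℝ) + (b - 1)) / (k ! * Gamma (k + (b - 1) + 1))
      = x ^ ((b - 1) / 2) * (yCoeff b k * x ^ k) := by
    have hpow : √x ^ (2 * (k : ℝ) + (b - 1)) = x ^ k * x ^ ((b - 1) / 2) := by
      rw [rpow_add hsx, sqrt_eq_rpow, ← rpow_mul hx.le, ← rpow_mul hx.le, ← rpow_natCast]
      ring_nf
    rw [hpow, yCoeff, show (k : ℝ) + (b - 1) + 1 = k + b by ring]
    ring
  rw [yFun, besselI, mul_div_cancel_left₀ _ two_ne_zero, tsum_congr hterm, tsum_mul_left,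
    ← mul_assoc, ← rpow_add hx, show (1 - b) / 2 + (b - 1) / 2 = 0 by ring, rpow_zero, one_mul]

lemma tsum_yCoeff_ode {b : ℝ} (hb : 0 < b) (x : ℝ) :
    x * ∑' n, derivCoeff (derivCoeff (yCoeff b)) n * x ^ n
      + b * ∑' n, derivCoeff (yCoeff b) n * x ^ n = ∑' n, yCoeff b n * x ^ n := by
  have hc := norm_yCoeff_le hb
  have hd := norm_derivCoeff_le_div_factorial hc
  rw [mul_tsum_derivCoeff_mul_pow hd, ← eq_sub_iff_add_eq, ← tsum_mul_left,
    ← Summable.tsum_sub (summable_mul_pow_of_norm_le_div_factorial hc x)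
      ((summable_mul_pow_of_norm_le_div_factorial hd x).mul_left b)]
  congr 1 with n
  rw [yCoeff_eq_mul_derivCoeff hb n]
  ring

/-- For every `b > 0`, the function `y(x) = x^{(1-b)/2} · I(b-1, 2√x)` is twice differentiable
on `(0,∞)` and satisfies `x·y''(x) + b·y'(x) = y(x)` for all `x > 0`. -/
theorem stmt3 (b : ℝ) (hb : 0 < b) :
    ∀ x : ℝ, 0 < x →
      DifferentiableAt ℝ (yFun b) x ∧ DifferentiableAt ℝ (deriv (yFun b)) x ∧
      x * deriv (deriv (yFun b)) x + b * deriv (yFun b) x = yFun b x := by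
  intro x hx
  have hc := norm_yCoeff_le hb
  have hd := norm_derivCoeff_le_div_factorial hc
  have hyS : yFun b =ᶠ[nhds x] fun z => ∑' n, yCoeff b n * z ^ n :=
    Filter.eventually_of_mem (Ioi_mem_nhds hx) fun _ hz => yFun_eq_tsum b hz
  have hy' : deriv (yFun b) =ᶠ[nhds x] fun z => ∑' n, derivCoeff (yCoeff b) n * z ^ n :=
    deriv_tsum_mul_pow hc ▸ hyS.deriv
  refine ⟨(hasDerivAt_tsum_mul_pow hc x).differentiableAt.congr_of_eventuallyEq hyS,
    (hasDerivAt_tsum_mul_pow hd x).differentiableAt.congr_of_eventuallyEq hy', ?_⟩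
  rw [hy'.deriv_eq, deriv_tsum_mul_pow hd, hy'.eq_of_nhds, hyS.eq_of_nhds]
  exact tsum_yCoeff_ode hb x
end
end

section
/- For every x ∈ Ω, the mixture density satisfies h(x) = e^{−tr(x)}/((2π)^{r(r−1)/4}·√(det x)) · ∏_{i=1}^r [ (√λ_i · e^{−λ_i}) / √(Δ_{i−1}(x)) · I(1, 2√(λ_i·Δ_i(x)/Δ_{i−1}(x))) ], where the series defining h(x) converges. -/
open MeasureTheory Matrix

noncomputable section

instance (r : ℕ) : MeasurableSpace (Matrix (Fin r) (Fin r) ℝ) :=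
  inferInstanceAs (MeasurableSpace (Fin r → Fin r → ℝ))

/-- Embedding of `Fin k` into `Fin r` as the first `k` indices. -/
def leadEmb (r k : ℕ) (h : k ≤ r) : Fin k → Fin r :=
  fun j => ⟨j.val, lt_of_lt_of_le j.isLt h⟩

/-- Embedding of `Fin k` into `Fin r` as the last `k` indices. -/
def trailEmb (r k : ℕ) (h : k ≤ r) : Fin k → Fin r :=
  fun j => ⟨r - k + j.val, by have := j.isLt; omega⟩

/-- `Δ_k(x)`: determinant of the leading principal `k × k` submatrix (`Δ_0 = 1`). -/
def Delta (r k : ℕ) (x : Matrix (Fin r) (Fin r) ℝ) : ℝ :=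
  if h : k ≤ r then (x.submatrix (leadEmb r k h) (leadEmb r k h)).det else 0

/-- `Δ*_k(x)`: determinant of the trailing principal `k × k` submatrix (`Δ*_0 = 1`). -/
def DeltaStar (r k : ℕ) (x : Matrix (Fin r) (Fin r) ℝ) : ℝ :=
  if h : k ≤ r then (x.submatrix (trailEmb r k h) (trailEmb r k h)).det else 0

/-- The generalized power `Δ_s(x) = Δ_1(x)^{s_1-s_2} ⋯ Δ_{r-1}(x)^{s_{r-1}-s_r} Δ_r(x)^{s_r}`
(indices of `s` are `0`-based in the formalization). -/
def GenPow (r : ℕ) (s : Fin r → ℝ) (x : Matrix (Fin r) (Fin r) ℝ) : ℝ :=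
  ∏ i : Fin r,
    Delta r (i.val + 1) x ^ (s i - if h : i.val + 1 < r then s ⟨i.val + 1, h⟩ else 0)

/-- The general term (indexed by `q ∈ ℕ^r`) of the series defining the mixture density:
`λ^q · Δ_{q+ρ-(n/r,…,n/r)}(x) / (q! · (2π)^{r(r-1)/4} · Γ(q_1)⋯Γ(q_r))`.
Here `ρ = (0, 1/2, …, (r-1)/2)` and `n/r = (r+1)/2`.  Terms with some `q_i = 0` vanish,
since `Real.Gamma 0 = 0` and division by `0` yields `0` (the convention `1/Γ(0) = 0`). -/
def mixTerm (r : ℕ) (lam : Fin r → ℝ) (x : Matrix (Fin r) (Fin r) ℝ) (q : Fin r → ℕ) : ℝ :=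
  (∏ i, lam i ^ q i) *
      GenPow r (fun i => (q i : ℝ) + (i.val : ℝ) / 2 - ((r : ℝ) + 1) / 2) x /
    ((∏ i, ((q i).factorial : ℝ)) * (2 * Real.pi) ^ (((r * (r - 1) : ℕ) : ℝ) / 4) *
      ∏ i, Real.Gamma ((q i : ℝ)))

/-- The mixture density `h(x) = e^{-(λ_1+⋯+λ_r)} e^{-tr x} ∑_{q} mixTerm q`. -/
def mixDensity (r : ℕ) (lam : Fin r → ℝ) (x : Matrix (Fin r) (Fin r) ℝ) : ℝ :=
  Real.exp (-∑ i, lam i) * Real.exp (-x.trace) * ∑' q : Fin r → ℕ, mixTerm r lam x q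

/-- `Ω`: the open cone of symmetric positive definite real `r × r` matrices. -/
def PDCone (r : ℕ) : Set (Matrix (Fin r) (Fin r) ℝ) := {x | x.IsSymm ∧ x.PosDef}

/-- Coordinates on symmetric matrices: the entries `x_{ij}`, `i ≤ j`. -/
abbrev SymIdx (r : ℕ) := {p : Fin r × Fin r // p.1 ≤ p.2}

/-- The symmetric matrix with prescribed entries `x_{ij}`, `i ≤ j`. -/
def symOfCoords (r : ℕ) (f : SymIdx r → ℝ) : Matrix (Fin r) (Fin r) ℝ :=
  Matrix.of fun i j => if h : i ≤ j then f ⟨(i, j), h⟩ else f ⟨(j, i), le_of_not_ge h⟩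

/-- The Lebesgue measure on the space of symmetric `r × r` matrices, normalized so that it is
the Euclidean measure associated with the trace inner product `⟨x,y⟩ = tr(xy)`
(an orthonormal basis is `{c_ii} ∪ {(e_ij+e_ji)/√2 : i<j}`, whence the factor `√2^{r(r-1)/2}`
relative to the coordinates `x_{ij}`, `i ≤ j`). -/
def lebSym (r : ℕ) : Measure (Matrix (Fin r) (Fin r) ℝ) :=
  ENNReal.ofReal (Real.sqrt 2 ^ (r * (r - 1) / 2)) • Measure.map (symOfCoords r) volume

/-- The Laplace transform `L_μ(θ) = ∫_Ω e^{tr(θx)} h(x) dx` of the mixture. -/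
def mixLaplace (r : ℕ) (lam : Fin r → ℝ) (θ : Matrix (Fin r) (Fin r) ℝ) : ℝ :=
  ∫ x in PDCone r, Real.exp ((θ * x).trace) * mixDensity r lam x ∂lebSym r

/-- `P_θ`: the probability measure on `Ω` with Lebesgue density
`e^{tr(θx)} h(x) / L_μ(θ)`. -/
def mixNEF (r : ℕ) (lam : Fin r → ℝ) (θ : Matrix (Fin r) (Fin r) ℝ) :
    Measure (Matrix (Fin r) (Fin r) ℝ) :=
  ((lebSym r).restrict (PDCone r)).withDensity fun x =>
    ENNReal.ofReal (Real.exp ((θ * x).trace) * mixDensity r lam x / mixLaplace r lam θ)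

/-- The mean `m(θ) = ∫_Ω x dP_θ(x)` (computed entrywise). -/
def mixMean (r : ℕ) (lam : Fin r → ℝ) (θ : Matrix (Fin r) (Fin r) ℝ) :
    Matrix (Fin r) (Fin r) ℝ :=
  Matrix.of fun i j => ∫ x, x i j ∂mixNEF r lam θ

/-- `(P*_k(x))⁻¹`: the `r × r` symmetric matrix whose trailing `k × k` block is the inverse of
the trailing principal `k × k` submatrix of `x`, all other entries being `0`
(`(P*_0(x))⁻¹ = 0`). -/
def PstarInv (r k : ℕ) (x : Matrix (Fin r) (Fin r) ℝ) : Matrix (Fin r) (Fin r) ℝ :=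
  if h : k ≤ r then
    Matrix.of fun i j =>
      if hij : r - k ≤ i.val ∧ r - k ≤ j.val then
        (x.submatrix (trailEmb r k h) (trailEmb r k h))⁻¹
          ⟨i.val - (r - k), by have := i.isLt; omega⟩
          ⟨j.val - (r - k), by have := j.isLt; omega⟩
      else 0
  else 0

/-- `b_i(m) = (i-1)/4 + √(((i-1)/4)² + λ_i Δ_i(m)/Δ_{i-1}(m))` (`i : Fin r` is `0`-based,
so `(i-1)` in the `1`-based notation reads `i.val` here). -/
def bFun (r : ℕ) (lam : Fin r → ℝ) (i : Fin r) (m : Matrix (Fin r) (Fin r) ℝ) : ℝ :=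
  (i.val : ℝ) / 4 +
    Real.sqrt (((i.val : ℝ) / 4) ^ 2 + lam i * (Delta r (i.val + 1) m / Delta r i.val m))

/-! With `d_i = Δ_{i+1}(x)/Δ_i(x)` the generalized power telescopes to `Δ_s(x) = ∏ d_i^{s_i}`,
so the general term of the series is a constant times `∏ (λ_i d_i)^{q_i}/(q_i! Γ(q_i))`. The
series over `ℕ^r` is then the product of `r` one-variable series, and after the shift
`q = k + 1` each of them is `√t · I(1, 2√t)` at `t = λ_i d_i`. The leftover powers of the `d_i`
telescope once more, to `1/(√(det x) ∏ √Δ_i(x))`. -/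

open Nat Real in
lemma hasSum_besselI_one {t : ℝ} (ht : 0 ≤ t) :
    HasSum (fun k : ℕ => √t * t ^ k / (k ! * (k + 1)!)) (besselI 1 (2 * √t)) := by
  have hterm : ∀ k : ℕ, (2 * √t / 2) ^ (2 * (k : ℝ) + 1) / (k ! * Gamma (k + 1 + 1))
      = √t * t ^ k / (k ! * (k + 1)!) := by
    intro k
    rw [show 2 * (k : ℝ) + 1 = ((2 * k + 1 : ℕ) : ℝ) by push_cast; ring, rpow_natCast,
      show (k : ℝ) + 1 + 1 = ((k + 1 : ℕ) : ℝ) + 1 by push_cast; ring, Gamma_nat_eq_factorial,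
      mul_div_cancel_left₀ _ two_ne_zero, pow_succ, pow_mul, sq_sqrt ht, mul_comm]
  have hsum : Summable (fun k : ℕ => √t * t ^ k / (k ! * (k + 1)!)) := by
    refine .of_nonneg_of_le (fun k => by positivity) (fun k => ?_)
      ((Real.summable_pow_div_factorial t).mul_left √t)
    rw [mul_div_assoc]
    gcongr
    exact le_mul_of_one_le_right (by positivity) (mod_cast (k + 1).factorial_pos)
  rw [besselI, tsum_congr hterm]
  exact hsum.hasSum

open Nat Real in
lemma hasSum_pow_div_factorial_mul_Gamma {t : ℝ} (ht : 0 ≤ t) :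
    HasSum (fun q : ℕ => t ^ q / (q ! * Gamma q)) (√t * besselI 1 (2 * √t)) := by
  have hshift : (fun k : ℕ => t ^ (k + 1) / ((k + 1 : ℕ)! * Gamma (k + 1 : ℕ)))
      = fun k => √t * (√t * t ^ k / (k ! * (k + 1)!)) := by
    funext k
    rw [Nat.cast_succ, Gamma_nat_eq_factorial, ← mul_div_assoc, ← mul_assoc, mul_self_sqrt ht,
      pow_succ]
    ring
  -- the `q = 0` term is dropped since `Gamma 0 = 0`
  rw [← hasSum_nat_add_iff' 1, hshift]
  simpa using (hasSum_besselI_one ht).mul_left √t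

lemma hasSum_pi_prod_of_nonneg {ι : Type*} {n : ℕ} {g : Fin n → ι → ℝ} {a : Fin n → ℝ}
    (hg : ∀ i k, 0 ≤ g i k) (ha : ∀ i, HasSum (g i) (a i)) :
    HasSum (fun q : Fin n → ι => ∏ i, g i (q i)) (∏ i, a i) := by
  induction n with
  | zero => simp
  | succ n ih =>
    have htail := ih (fun i k => hg i.succ k) (fun i => ha i.succ)
    have hnonneg : 0 ≤ fun q : Fin n → ι => ∏ i, g i.succ (q i) :=
      fun q => Finset.prod_nonneg fun i _ => hg i.succ (q i)
    have hhead : 0 ≤ g 0 := hg 0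
    have hsummable := (ha 0).summable.mul_of_nonneg htail.summable hhead hnonneg
    have hprod := (ha 0).mul htail hsummable
    have hcons : (fun q : Fin (n + 1) → ι => ∏ i, g i (q i)) ∘ Fin.consEquiv (fun _ => ι)
        = fun p => g 0 p.1 * ∏ i : Fin n, g i.succ (p.2 i) := by
      funext p
      simp [Fin.consEquiv, Fin.prod_univ_succ]
    rw [← (Fin.consEquiv fun _ => ι).hasSum_iff, hcons, Fin.prod_univ_succ]
    exact hprod

lemma prod_succ_mul_eq_prod_mul {M : Type*} [CommMonoid M] (f : ℕ → M) (n : ℕ) :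
    (∏ i : Fin n, f (i + 1)) * f 0 = (∏ i : Fin n, f i) * f n := by
  rw [Fin.prod_univ_eq_prod_range (fun i => f (i + 1)), Fin.prod_univ_eq_prod_range f,
    ← Finset.prod_range_succ', Finset.prod_range_succ]

lemma prod_rpow_sub_eq_prod_div_rpow {n : ℕ} {b s : ℕ → ℝ} (hb : ∀ k ≤ n, 0 < b k)
    (hb0 : b 0 = 1) (hs : s n = 0) :
    ∏ i : Fin n, b (i + 1) ^ (s i - s (i + 1)) = ∏ i : Fin n, (b (i + 1) / b i) ^ s i := by
  have htel := prod_succ_mul_eq_prod_mul (fun k => b k ^ s k) n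
  simp only [hb0, hs, Real.one_rpow, Real.rpow_zero, mul_one] at htel
  rw [Finset.prod_congr rfl fun i _ => Real.rpow_sub (hb _ i.isLt) _ _,
    Finset.prod_congr rfl fun i _ => Real.div_rpow (hb _ i.isLt).le (hb _ i.isLt.le).le _,
    Finset.prod_div_distrib, Finset.prod_div_distrib, htel]

section GenPow

variable {r : ℕ} {x : Matrix (Fin r) (Fin r) ℝ}

lemma Delta_pos (hx : x.PosDef) {k : ℕ} (hk : k ≤ r) : 0 < Delta r k x := by
  rw [Delta, dif_pos hk]
  exact (hx.submatrix fun a b hab => by simpa [leadEmb, Fin.ext_iff] using hab).det_pos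

lemma Delta_zero : Delta r 0 x = 1 := by
  simp [Delta]

lemma Delta_self : Delta r r x = x.det := by
  rw [Delta, dif_pos le_rfl]
  rfl

lemma GenPow_eq_prod_rpow (hx : x.PosDef) (s : Fin r → ℝ) :
    GenPow r s x = ∏ i : Fin r, (Delta r (i + 1) x / Delta r i x) ^ s i := by
  let sN : ℕ → ℝ := fun k => if h : k < r then s ⟨k, h⟩ else 0
  have h := prod_rpow_sub_eq_prod_div_rpow (b := fun k => Delta r k x) (s := sN)
    (fun k hk => Delta_pos hx hk) Delta_zero (by simp [sN])
  simpa [GenPow, sN] using h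

lemma GenPow_add (hx : x.PosDef) (s t : Fin r → ℝ) :
    GenPow r (s + t) x = GenPow r s x * GenPow r t x := by
  simp only [GenPow_eq_prod_rpow hx, Pi.add_apply, ← Finset.prod_mul_distrib]
  exact Finset.prod_congr rfl fun i _ =>
    Real.rpow_add (div_pos (Delta_pos hx i.isLt) (Delta_pos hx i.isLt.le)) _ _

lemma GenPow_sub_div_two (hx : x.PosDef) :
    GenPow r (fun i => ((i : ℝ) - r) / 2) x = (√x.det * ∏ i : Fin r, √(Delta r i x))⁻¹ := by
  have hexp : ∀ i : Fin r, ((i : ℝ) - r) / 2 -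
      (if h : (i : ℕ) + 1 < r then (((⟨i + 1, h⟩ : Fin r) : ℝ) - r) / 2 else 0) = -(1 / 2) := by
    intro i
    split_ifs with h
    · push_cast
      ring
    · have : (i : ℝ) + 1 = r := by exact_mod_cast (by omega : (i : ℕ) + 1 = r)
      linarith
  have htel := prod_succ_mul_eq_prod_mul (fun k => √(Delta r k x)) r
  rw [Delta_zero, Delta_self, Real.sqrt_one, mul_one] at htel
  rw [GenPow, Finset.prod_congr rfl fun i _ => by rw [hexp i], mul_comm, ← htel,
    ← Finset.prod_inv_distrib]
  refine Finset.prod_congr rfl fun i _ => ?_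
  rw [Real.rpow_neg (Delta_pos hx i.isLt).le, Real.sqrt_eq_rpow]

open Nat Real in
lemma mixTerm_eq (hx : x.PosDef) (lam : Fin r → ℝ) (q : Fin r → ℕ) :
    mixTerm r lam x q = GenPow r (fun i => (i : ℝ) / 2 - ((r : ℝ) + 1) / 2) x /
        (2 * π) ^ (((r * (r - 1) : ℕ) : ℝ) / 4) *
      ∏ i, (lam i * (Delta r (i + 1) x / Delta r i x)) ^ q i / ((q i)! * Gamma (q i)) := by
  have hsplit : (fun i : Fin r => (q i : ℝ) + (i : ℝ) / 2 - ((r : ℝ) + 1) / 2)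
      = (fun i => (q i : ℝ)) + fun i : Fin r => (i : ℝ) / 2 - ((r : ℝ) + 1) / 2 := by
    funext i
    simp only [Pi.add_apply]
    ring
  rw [mixTerm, hsplit, GenPow_add hx, GenPow_eq_prod_rpow hx (fun i => (q i : ℝ))]
  simp only [Real.rpow_natCast, mul_pow, div_eq_mul_inv, mul_inv, Finset.prod_mul_distrib,
    Finset.prod_inv_distrib]
  ring

open Real in
lemma hasSum_mixTerm (hx : x.PosDef) {lam : Fin r → ℝ} (hlam : ∀ i, 0 ≤ lam i) :
    HasSum (mixTerm r lam x)
      (GenPow r (fun i => (i : ℝ) / 2 - ((r : ℝ) + 1) / 2) x /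
          (2 * π) ^ (((r * (r - 1) : ℕ) : ℝ) / 4) *
        ∏ i, √(lam i * (Delta r (i + 1) x / Delta r i x)) *
          besselI 1 (2 * √(lam i * (Delta r (i + 1) x / Delta r i x)))) := by
  have hratio : ∀ i : Fin r, 0 ≤ lam i * (Delta r (i + 1) x / Delta r i x) := fun i =>
    mul_nonneg (hlam i) (div_pos (Delta_pos hx i.isLt) (Delta_pos hx i.isLt.le)).le
  rw [funext (mixTerm_eq hx lam)]
  refine (hasSum_pi_prod_of_nonneg (fun i k => ?_)
    fun i => hasSum_pow_div_factorial_mul_Gamma (hratio i)).mul_left _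
  have := Gamma_nonneg_of_nonneg (Nat.cast_nonneg (α := ℝ) k)
  have := hratio i
  positivity

lemma GenPow_mul_prod_sqrt (hx : x.PosDef) :
    GenPow r (fun i => (i : ℝ) / 2 - ((r : ℝ) + 1) / 2) x *
        ∏ i : Fin r, √(Delta r (i + 1) x / Delta r i x) =
      (√x.det * ∏ i : Fin r, √(Delta r i x))⁻¹ := by
  have hsqrt : ∏ i : Fin r, √(Delta r (i + 1) x / Delta r i x) = GenPow r (fun _ => 1 / 2) x := by
    simp only [GenPow_eq_prod_rpow hx, Real.sqrt_eq_rpow]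
  have hshift : ((fun i : Fin r => (i : ℝ) / 2 - ((r : ℝ) + 1) / 2) + fun _ => 1 / 2)
      = fun i : Fin r => ((i : ℝ) - r) / 2 := by
    funext i
    simp only [Pi.add_apply]
    ring
  rw [hsqrt, ← GenPow_add hx, hshift, GenPow_sub_div_two hx]

end GenPow

theorem stmt4_general (r : ℕ) (lam : Fin r → ℝ) (hlam : ∀ i, 0 < lam i)
    (x : Matrix (Fin r) (Fin r) ℝ) (hx : x ∈ PDCone r) :
    Summable (mixTerm r lam x) ∧
    mixDensity r lam x =
      Real.exp (-x.trace) /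
          ((2 * Real.pi) ^ (((r * (r - 1) : ℕ) : ℝ) / 4) * Real.sqrt x.det) *
        ∏ i : Fin r,
          Real.sqrt (lam i) * Real.exp (-lam i) / Real.sqrt (Delta r i.val x) *
            besselI 1 (2 * Real.sqrt (lam i * (Delta r (i.val + 1) x / Delta r i.val x))) := by
  have hsum := hasSum_mixTerm hx.2 fun i => (hlam i).le
  refine ⟨hsum.summable, ?_⟩
  have hconst := GenPow_mul_prod_sqrt hx.2
  have hexp : Real.exp (-∑ i, lam i) = ∏ i, Real.exp (-lam i) := by
    rw [← Finset.sum_neg_distrib, Real.exp_sum]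
  rw [mixDensity, hsum.tsum_eq, hexp]
  simp only [Real.sqrt_mul (hlam _).le, Finset.prod_mul_distrib, Finset.prod_div_distrib]
  linear_combination (Real.exp (-x.trace) / (2 * Real.pi) ^ (((r * (r - 1) : ℕ) : ℝ) / 4) *
    (∏ i : Fin r, Real.sqrt (lam i)) * (∏ i : Fin r, Real.exp (-lam i)) *
    ∏ i : Fin r, besselI 1 (2 * (Real.sqrt (lam i) *
      Real.sqrt (Delta r (i.val + 1) x / Delta r i.val x)))) * hconst

/-- Theorem 3.2: for `x ∈ Ω` the series defining the mixture density converges and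
`h(x) = e^{-tr(x)}/((2π)^{r(r-1)/4} √(det x)) ·
  ∏_{i=1}^r (√λ_i e^{-λ_i}/√(Δ_{i-1}(x))) · I(1, 2√(λ_i Δ_i(x)/Δ_{i-1}(x)))`. -/
theorem stmt4 (r : ℕ) (hr : 1 ≤ r) (lam : Fin r → ℝ) (hlam : ∀ i, 0 < lam i)
    (x : Matrix (Fin r) (Fin r) ℝ) (hx : x ∈ PDCone r) :
    Summable (mixTerm r lam x) ∧
    mixDensity r lam x =
      Real.exp (-x.trace) /
          ((2 * Real.pi) ^ (((r * (r - 1) : ℕ) : ℝ) / 4) * Real.sqrt x.det) *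
        ∏ i : Fin r,
          Real.sqrt (lam i) * Real.exp (-lam i) / Real.sqrt (Delta r i.val x) *
            besselI 1 (2 * Real.sqrt (lam i * (Delta r (i.val + 1) x / Delta r i.val x))) :=
  stmt4_general r lam hlam x hx
end
end
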